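/- arXiv:2205.08494 — 3 statements merged into one kernel-verified Lean document; each statement's English description precedes it below -/
import Mathlib

section
/- Let X be a random vector in ℝ^d with E‖X‖⁴ finite, and suppose that for every standard basis vector e_i, (E⟨X,e_i⟩⁴)^{1/4} ≤ κ (E⟨X,e_i⟩²)^{1/2} with κ ≥ 0. Let Σ be the (entrywise) second-moment matrix of X, i.e. Σ_{ij} = E⟨X,e_i⟩⟨X,e_j⟩. Then E‖X‖₂⁴ ≤ κ⁴ (tr Σ)². -/
open MeasureTheory ProbabilityTheory
open scoped ProbabilityTheory

/-! Expanding `‖X‖⁴ = (∑ᵢ Xᵢ²)²` writes `𝔼‖X‖⁴` as `∑ᵢⱼ 𝔼[Xᵢ² Xⱼ²]`. By Cauchy–Schwarz each term is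
at most `√(𝔼Xᵢ⁴) √(𝔼Xⱼ⁴)`, and the moment hypothesis bounds `√(𝔼Xᵢ⁴)` by `κ² 𝔼Xᵢ²`, so the double
sum is at most `κ⁴ (∑ᵢ 𝔼Xᵢ²)²`. -/

theorem Real.rpow_half_le_sq_mul_of_rpow_quarter_le {a b κ : ℝ} (ha : 0 ≤ a) (hb : 0 ≤ b)
    (h : a ^ ((1 : ℝ) / 4) ≤ κ * b ^ ((1 : ℝ) / 2)) : a ^ ((1 : ℝ) / 2) ≤ κ ^ 2 * b := by
  calc a ^ ((1 : ℝ) / 2) = (a ^ ((1 : ℝ) / 4)) ^ 2 := by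
        rw [← Real.rpow_mul_natCast ha]; norm_num
    _ ≤ (κ * b ^ ((1 : ℝ) / 2)) ^ 2 := pow_le_pow_left₀ (Real.rpow_nonneg ha _) h 2
    _ = κ ^ 2 * b := by
        rw [mul_pow, ← Real.rpow_mul_natCast hb]; norm_num

theorem EuclideanSpace.sq_apply_le_norm_sq {ι : Type*} [Fintype ι] (x : EuclideanSpace ℝ ι)
    (i : ι) : x i ^ 2 ≤ ‖x‖ ^ 2 := by
  simpa only [Real.norm_eq_abs, sq_abs] using
    pow_le_pow_left₀ (norm_nonneg _) (PiLp.norm_apply_le x i) 2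

theorem EuclideanSpace.norm_pow_four_eq_sum_sum {ι : Type*} [Fintype ι]
    (x : EuclideanSpace ℝ ι) : ‖x‖ ^ 4 = ∑ i, ∑ j, x i ^ 2 * x j ^ 2 := by
  rw [← Finset.sum_mul_sum, ← EuclideanSpace.real_norm_sq_eq]
  ring

section CauchySchwarz

variable {α : Type*} [MeasurableSpace α] {μ : Measure α}

theorem MeasureTheory.memLp_two_sq_of_integrable_pow_four {f : α → ℝ}
    (hf : AEStronglyMeasurable f μ) (hf4 : Integrable (fun a => f a ^ 4) μ) :
    MemLp (fun a => f a ^ 2) (ENNReal.ofReal 2) μ := by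
  rw [ENNReal.ofReal_ofNat]
  exact (memLp_two_iff_integrable_sq (hf.pow 2)).mpr (by simpa only [Pi.pow_apply, ← pow_mul] using hf4)

theorem MeasureTheory.integral_sq_mul_sq_le {f g : α → ℝ}
    (hf : AEStronglyMeasurable f μ) (hg : AEStronglyMeasurable g μ)
    (hf4 : Integrable (fun a => f a ^ 4) μ) (hg4 : Integrable (fun a => g a ^ 4) μ) :
    ∫ a, f a ^ 2 * g a ^ 2 ∂μ ≤
      (∫ a, f a ^ 4 ∂μ) ^ ((1 : ℝ) / 2) * (∫ a, g a ^ 4 ∂μ) ^ ((1 : ℝ) / 2) := by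
  have := integral_mul_le_Lp_mul_Lq_of_nonneg Real.HolderConjugate.two_two
    (ae_of_all _ fun a => sq_nonneg (f a)) (ae_of_all _ fun a => sq_nonneg (g a))
    (memLp_two_sq_of_integrable_pow_four hf hf4) (memLp_two_sq_of_integrable_pow_four hg hg4)
  simpa only [Real.rpow_two, ← pow_mul] using this

end CauchySchwarz

section RandomVector

variable {ι Ω : Type*} [Fintype ι] [MeasurableSpace Ω] {μ : Measure Ω}
  {X : Ω → EuclideanSpace ℝ ι}

theorem integrable_sq_apply_mul_sq_apply (hX : AEMeasurable X μ)
    (h4 : Integrable (fun ω => ‖X ω‖ ^ 4) μ) (i j : ι) :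
    Integrable (fun ω => X ω i ^ 2 * X ω j ^ 2) μ := by
  have hXi : ∀ k, AEMeasurable (fun ω => X ω k) μ := fun k =>
    (EuclideanSpace.proj k).continuous.measurable.comp_aemeasurable hX
  refine h4.mono' (((hXi i).pow_const 2).mul ((hXi j).pow_const 2)).aestronglyMeasurable ?_
  refine ae_of_all _ fun ω => ?_
  rw [Real.norm_of_nonneg (by positivity), show ‖X ω‖ ^ 4 = ‖X ω‖ ^ 2 * ‖X ω‖ ^ 2 by ring]
  exact mul_le_mul (EuclideanSpace.sq_apply_le_norm_sq _ i)
    (EuclideanSpace.sq_apply_le_norm_sq _ j) (sq_nonneg _) (sq_nonneg _)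

theorem integral_norm_pow_four_eq_sum_sum (hX : AEMeasurable X μ)
    (h4 : Integrable (fun ω => ‖X ω‖ ^ 4) μ) :
    ∫ ω, ‖X ω‖ ^ 4 ∂μ = ∑ i, ∑ j, ∫ ω, X ω i ^ 2 * X ω j ^ 2 ∂μ := by
  have hint := integrable_sq_apply_mul_sq_apply hX h4
  simp_rw [EuclideanSpace.norm_pow_four_eq_sum_sum]
  rw [integral_finsetSum _ fun i _ => integrable_finsetSum _ fun j _ => hint i j]
  exact Finset.sum_congr rfl fun i _ => integral_finsetSum _ fun j _ => hint i j

theorem integral_sq_apply_mul_sq_apply_le (hX : AEMeasurable X μ)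
    (h4 : Integrable (fun ω => ‖X ω‖ ^ 4) μ) (i j : ι) :
    ∫ ω, X ω i ^ 2 * X ω j ^ 2 ∂μ ≤
      (∫ ω, X ω i ^ 4 ∂μ) ^ ((1 : ℝ) / 2) * (∫ ω, X ω j ^ 4 ∂μ) ^ ((1 : ℝ) / 2) := by
  have hXi : ∀ k, AEStronglyMeasurable (fun ω => X ω k) μ := fun k =>
    ((EuclideanSpace.proj k).continuous.measurable.comp_aemeasurable hX).aestronglyMeasurable
  have hXi4 : ∀ k, Integrable (fun ω => X ω k ^ 4) μ := fun k => by
    simpa only [← pow_add] using integrable_sq_apply_mul_sq_apply hX h4 k k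
  exact integral_sq_mul_sq_le (hXi i) (hXi j) (hXi4 i) (hXi4 j)

end RandomVector

theorem fourth_moment_norm_bound_general {d : ℕ} {Ω : Type*} [MeasureSpace Ω]
    (X : Ω → EuclideanSpace ℝ (Fin d)) (κ : ℝ)
    (hmeas : AEMeasurable X ℙ)
    (hint : Integrable (fun ω => ‖X ω‖ ^ 4) ℙ)
    (hmom : ∀ i : Fin d,
      (∫ ω, (X ω i) ^ 4) ^ ((1 : ℝ) / 4) ≤ κ * (∫ ω, (X ω i) ^ 2) ^ ((1 : ℝ) / 2)) :
    ∫ ω, ‖X ω‖ ^ 4 ≤ κ ^ 4 * (∑ i : Fin d, ∫ ω, (X ω i) ^ 2) ^ 2 := by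
  have hroot : ∀ i, (∫ ω, X ω i ^ 4) ^ ((1 : ℝ) / 2) ≤ κ ^ 2 * ∫ ω, X ω i ^ 2 := fun i =>
    Real.rpow_half_le_sq_mul_of_rpow_quarter_le (integral_nonneg fun _ => by positivity)
      (integral_nonneg fun _ => by positivity) (hmom i)
  calc ∫ ω, ‖X ω‖ ^ 4
      = ∑ i, ∑ j, ∫ ω, X ω i ^ 2 * X ω j ^ 2 := integral_norm_pow_four_eq_sum_sum hmeas hint
    _ ≤ ∑ i, ∑ j, (κ ^ 2 * ∫ ω, X ω i ^ 2) * (κ ^ 2 * ∫ ω, X ω j ^ 2) := by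
        gcongr with i _ j _
        exact (integral_sq_apply_mul_sq_apply_le hmeas hint i j).trans
          (mul_le_mul (hroot i) (hroot j) (by positivity) (by positivity))
    _ = κ ^ 4 * (∑ i, ∫ ω, X ω i ^ 2) ^ 2 := by
        rw [← Finset.sum_mul_sum, ← Finset.mul_sum]
        ring

/-- If `X` is a random vector in `ℝ^d` with finite fourth moment such that
for every standard basis direction `(𝔼⟨X,eᵢ⟩⁴)^{1/4} ≤ κ (𝔼⟨X,eᵢ⟩²)^{1/2}`, then
`𝔼‖X‖⁴ ≤ κ⁴ (tr Σ)²`, where `tr Σ = ∑ᵢ 𝔼⟨X,eᵢ⟩²`. -/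
theorem fourth_moment_norm_bound {d : ℕ} {Ω : Type*} [MeasureSpace Ω]
    [IsProbabilityMeasure (ℙ : Measure Ω)]
    (X : Ω → EuclideanSpace ℝ (Fin d)) (κ : ℝ) (hκ : 0 ≤ κ)
    (hmeas : AEMeasurable X ℙ)
    (hint : Integrable (fun ω => ‖X ω‖ ^ 4) ℙ)
    (hmom : ∀ i : Fin d,
      (∫ ω, (X ω i) ^ 4) ^ ((1 : ℝ) / 4) ≤ κ * (∫ ω, (X ω i) ^ 2) ^ ((1 : ℝ) / 2)) :
    ∫ ω, ‖X ω‖ ^ 4 ≤ κ ^ 4 * (∑ i : Fin d, ∫ ω, (X ω i) ^ 2) ^ 2 :=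
  fourth_moment_norm_bound_general X κ hmeas hint hmom
end

section
/- Define ψ as the truncation function ψ(x)= x on [-1,1], sign(x) outside. For every real a > 0 and every square-integrable random variable Z, E log(1 + Z + Z²) + a·E min{1, Z²/6} ≤ E log(1 + Z + (1 + (7+√6)(e^a − 1)/6) Z²). -/
/-!
Pointwise, with `m = min 1 (z²/6) ∈ [0,1]`, convexity of `exp` gives `e^{am} ≤ 1 + m(eᵃ - 1)`,
and `m (1 + z + z²) ≤ (7 + √6) z² / 6` (split at `|z| = √6`). Multiplying by `1 + z + z² > 0`
and taking logarithms gives the inequality of integrands. These are integrable: for `k > 1/4`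
the quadratic `1 + Z + k Z²` is integrable and bounded below by a positive constant, so its
logarithm is integrable as well.
-/

open MeasureTheory ProbabilityTheory
open scoped ProbabilityTheory

/-- The truncation function `ψ(x) = x` on `[-1,1]` and `ψ(x) = sign x` for `|x| > 1`. -/
noncomputable def trunc (x : ℝ) : ℝ := if |x| ≤ 1 then x else Real.sign x

lemma Real.abs_log_le_abs_log_add_of_le {c x : ℝ} (hc : 0 < c) (hcx : c ≤ x) :
    |Real.log x| ≤ |Real.log c| + x := by
  have hlog : Real.log c ≤ Real.log x := Real.log_le_log hc hcx
  have hself : Real.log x ≤ x := Real.log_le_self (hc.trans_le hcx).le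
  rw [abs_le]
  constructor <;> linarith [neg_abs_le (Real.log c), abs_nonneg (Real.log c)]

lemma MeasureTheory.Integrable.log_of_le {α : Type*} [MeasurableSpace α] {μ : Measure α}
    [IsFiniteMeasure μ] {f : α → ℝ} {c : ℝ} (hf : Integrable f μ) (hc : 0 < c)
    (hcf : ∀ᵐ x ∂μ, c ≤ f x) : Integrable (fun x ↦ Real.log (f x)) μ := by
  refine ((integrable_const |Real.log c|).add hf).mono'
    (Real.measurable_log.comp_aemeasurable hf.aemeasurable).aestronglyMeasurable ?_
  filter_upwards [hcf] with x hx
  exact Real.abs_log_le_abs_log_add_of_le hc hx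

lemma one_sub_inv_four_mul_le_one_add_add_mul_sq {k : ℝ} (hk : 0 < k) (z : ℝ) :
    1 - (4 * k)⁻¹ ≤ 1 + z + k * z ^ 2 := by
  have hsq : 0 ≤ k * (z + (2 * k)⁻¹) ^ 2 := by positivity
  have : k * (z + (2 * k)⁻¹) ^ 2 = z + k * z ^ 2 + (4 * k)⁻¹ := by field_simp; ring
  linarith

lemma MeasureTheory.MemLp.integrable_log_one_add_add_mul_sq {α : Type*} [MeasurableSpace α]
    {μ : Measure α} [IsFiniteMeasure μ] {Z : α → ℝ} (hZ : MemLp Z 2 μ) {k : ℝ} (hk : 1 / 4 < k) :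
    Integrable (fun x ↦ Real.log (1 + Z x + k * Z x ^ 2)) μ := by
  have hZ1 : Integrable Z μ := hZ.integrable one_le_two
  refine ((integrable_const 1).add hZ1 |>.add (hZ.integrable_sq.const_mul k)).log_of_le
    (c := 1 - (4 * k)⁻¹) ?_ (ae_of_all _ fun x ↦
      one_sub_inv_four_mul_le_one_add_add_mul_sq (by linarith) (Z x))
  rw [sub_pos, inv_lt_one₀ (by linarith)]
  linarith

lemma Real.exp_mul_le_one_add_mul_exp_sub_one (a : ℝ) {s : ℝ} (hs₀ : 0 ≤ s) (hs₁ : s ≤ 1) :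
    Real.exp (a * s) ≤ 1 + s * (Real.exp a - 1) := by
  have h := convexOn_exp.2 (Set.mem_univ 0) (Set.mem_univ a) (sub_nonneg.2 hs₁) hs₀
    (sub_add_cancel 1 s)
  simp only [smul_eq_mul, mul_zero, zero_add, Real.exp_zero, mul_one] at h
  rw [mul_comm]
  linarith

lemma min_one_sq_div_six_mul_le (z : ℝ) :
    min 1 (z ^ 2 / 6) * (1 + z + z ^ 2) ≤ (7 + Real.sqrt 6) / 6 * z ^ 2 := by
  rcases le_total (z ^ 2 / 6) 1 with h | h
  · have hzs : |z| ≤ Real.sqrt 6 := Real.abs_le_sqrt (by linarith)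
    rw [min_eq_right h]
    calc z ^ 2 / 6 * (1 + z + z ^ 2) ≤ z ^ 2 / 6 * (7 + Real.sqrt 6) :=
          mul_le_mul_of_nonneg_left (by linarith [le_abs_self z]) (by positivity)
      _ = (7 + Real.sqrt 6) / 6 * z ^ 2 := by ring
  · have hzs : Real.sqrt 6 ≤ |z| :=
      (Real.sqrt_le_sqrt (by linarith)).trans_eq (Real.sqrt_sq_eq_abs z)
    rw [min_eq_left h, one_mul]
    have hs6 : Real.sqrt 6 ^ 2 = 6 := Real.sq_sqrt (by norm_num)
    have habs : |z| ^ 2 = z ^ 2 := sq_abs z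
    have hprod : 0 ≤ Real.sqrt 6 * |z| * (|z| - Real.sqrt 6) := by
      have := sub_nonneg.2 hzs
      positivity
    have hexpand : Real.sqrt 6 * |z| * (|z| - Real.sqrt 6) = Real.sqrt 6 * z ^ 2 - 6 * |z| := by
      linear_combination Real.sqrt 6 * habs - |z| * hs6
    linarith [le_abs_self z]

lemma log_add_mul_min_one_sq_div_six_le {a : ℝ} (ha : 0 ≤ a) (z : ℝ) :
    Real.log (1 + z + z ^ 2) + a * min 1 (z ^ 2 / 6)
      ≤ Real.log (1 + z + (1 + (7 + Real.sqrt 6) * (Real.exp a - 1) / 6) * z ^ 2) := by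
  set m := min 1 (z ^ 2 / 6)
  have hq : 0 < 1 + z + z ^ 2 := by nlinarith [sq_nonneg (z + 1 / 2)]
  have hb : 0 ≤ Real.exp a - 1 := sub_nonneg.2 (Real.one_le_exp ha)
  have hexp : Real.exp (a * m) ≤ 1 + m * (Real.exp a - 1) :=
    Real.exp_mul_le_one_add_mul_exp_sub_one a (le_min zero_le_one (by positivity))
      (min_le_left _ _)
  rw [← Real.log_exp (a * m), ← Real.log_mul hq.ne' (Real.exp_pos _).ne']
  refine Real.log_le_log (by positivity) ?_
  calc (1 + z + z ^ 2) * Real.exp (a * m)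
      ≤ (1 + z + z ^ 2) * (1 + m * (Real.exp a - 1)) := by gcongr
    _ = 1 + z + z ^ 2 + m * (1 + z + z ^ 2) * (Real.exp a - 1) := by ring
    _ ≤ 1 + z + z ^ 2 + (7 + Real.sqrt 6) / 6 * z ^ 2 * (Real.exp a - 1) := by
        gcongr 1 + z + z ^ 2 + ?_ * _
        exact min_one_sq_div_six_mul_le z
    _ = _ := by ring

/-- For every `a > 0` and square-integrable `Z`,
`𝔼 log(1 + Z + Z²) + a 𝔼 min{1, Z²/6} ≤ 𝔼 log(1 + Z + (1 + (7+√6)(eᵃ−1)/6) Z²)`. -/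
theorem trunc_log_ineq {Ω : Type*} [MeasureSpace Ω] [IsProbabilityMeasure (ℙ : Measure Ω)]
    (Z : Ω → ℝ) (hZ : MemLp Z 2 ℙ) (a : ℝ) (ha : 0 < a) :
    (∫ ω, Real.log (1 + Z ω + (Z ω) ^ 2)) + a * ∫ ω, min 1 ((Z ω) ^ 2 / 6)
      ≤ ∫ ω, Real.log (1 + Z ω
          + (1 + (7 + Real.sqrt 6) * (Real.exp a - 1) / 6) * (Z ω) ^ 2) := by
  have hc : 1 ≤ 1 + (7 + Real.sqrt 6) * (Real.exp a - 1) / 6 := by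
    have hb : 0 ≤ Real.exp a - 1 := sub_nonneg.2 (Real.one_le_exp ha.le)
    exact le_add_of_nonneg_right (by positivity)
  have hlog₁ : Integrable (fun ω ↦ Real.log (1 + Z ω + Z ω ^ 2)) ℙ := by
    simpa using hZ.integrable_log_one_add_add_mul_sq (k := 1) (by norm_num)
  have hmin : Integrable (fun ω ↦ min 1 (Z ω ^ 2 / 6)) ℙ :=
    (integrable_const 1).inf (hZ.integrable_sq.div_const 6)
  rw [← integral_const_mul, ← integral_add hlog₁ (hmin.const_mul a)]
  exact integral_mono (hlog₁.add (hmin.const_mul a))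
    (hZ.integrable_log_one_add_add_mul_sq (by linarith))
    fun ω ↦ log_add_mul_min_one_sq_div_six_le ha.le (Z ω)
end

section
/- Let Y be a real random variable taking values −1/√η, −1, 1, 1/√η with probabilities η/2, (1−η)/2, (1−η)/2, η/2 respectively, where 0 < η ≤ 1/4. Then E Y = 0, E Y² = 2 − η ≤ 2, the (η/2)-quantile satisfies Q_{η/2}(Y) = −1 (i.e. P(Y ≥ −1) = 1 − η/2 and P(Y ≥ t) < 1 − η/2 for every t > −1), and E|Y + 1|·1{Y ≤ −1} = √η/2 − η/2 ≥ √η/4. -/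
open MeasureTheory ProbabilityTheory
open scoped ProbabilityTheory ENNReal

/-! With `s = √η`, each quantity in the statement is `𝔼 g(Y)` for a suitable `g` (the identity,
the square, the indicator of a half-line, or `|x + 1|` cut off at `-1`), hence the finite sum
of `g` over the atoms `-1/s < -1 < 1 < 1/s` weighted by their masses. The symmetric atoms
cancel in the mean, `(η/2)·(1/s²) = 1/2` makes the second moment `2 - η`, only the atom `-1/s`
lies strictly below `-1`, with `|-1/s + 1| = 1/s - 1`, and the mass strictly above `-1` is
`1/2 < 1 - η/2`. The final inequality is `s ≤ 1/2`. -/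

section FiniteRange

variable {Ω α E : Type*} [MeasurableSpace Ω] [MeasurableSpace α] [MeasurableSingletonClass α]
  [NormedAddCommGroup E] [NormedSpace ℝ E] [CompleteSpace E]
  {μ : Measure Ω} [IsFiniteMeasure μ] {Y : Ω → α} {S : Finset α}

theorem integral_comp_eq_sum_of_forall_mem (hY : Measurable Y) (hS : ∀ ω, Y ω ∈ S)
    (g : α → E) : ∫ ω, g (Y ω) ∂μ = ∑ x ∈ S, μ.real (Y ⁻¹' {x}) • g x := by
  have hmeas : ∀ x, MeasurableSet (Y ⁻¹' {x}) := fun x => hY (measurableSet_singleton x)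
  have hconst : ∀ x, ∀ ω ∈ Y ⁻¹' {x}, g (Y ω) = g x := fun x ω hω => congrArg g hω
  have hcover : (⋃ x ∈ S, Y ⁻¹' {x}) = Set.univ :=
    Set.eq_univ_of_forall fun ω => Set.mem_biUnion (hS ω) rfl
  rw [← setIntegral_univ, ← hcover, integral_biUnion_finset S (fun x _ => hmeas x)
    (fun x _ y _ hxy => (Set.disjoint_singleton.2 hxy).preimage Y)
    (fun x _ => (integrableOn_const (measure_ne_top _ _)).congr_fun
      (fun ω hω => (hconst x ω hω).symm) (hmeas x))]
  exact Finset.sum_congr rfl fun x _ => by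
    rw [setIntegral_congr_fun (hmeas x) (hconst x), setIntegral_const]

end FiniteRange

section Preimage

variable {Ω α E : Type*} [MeasurableSpace Ω] [MeasurableSpace α] [NormedAddCommGroup E]
  [NormedSpace ℝ E] {μ : Measure Ω} {Y : Ω → α} {T : Set α}

theorem setIntegral_preimage_eq_integral_indicator_comp (hY : Measurable Y)
    (hT : MeasurableSet T) (g : α → E) :
    ∫ ω in Y ⁻¹' T, g (Y ω) ∂μ = ∫ ω, T.indicator g (Y ω) ∂μ := by
  rw [← integral_indicator (hY hT)]
  exact integral_congr_ae (Filter.Eventually.of_forall fun ω => Set.indicator_comp_right Y)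

theorem measureReal_preimage_eq_integral_indicator_comp (hY : Measurable Y)
    (hT : MeasurableSet T) : μ.real (Y ⁻¹' T) = ∫ ω, T.indicator 1 (Y ω) ∂μ := by
  rw [← integral_indicator_one (hY hT)]
  exact integral_congr_ae (Filter.Eventually.of_forall fun ω =>
    Set.indicator_comp_right Y (g := (1 : α → ℝ)))

end Preimage

theorem Finset.sum_four_of_lt {α M : Type*} [LinearOrder α] [AddCommMonoid M] {a b c d : α}
    (hab : a < b) (hbc : b < c) (hcd : c < d) (f : α → M) :
    ∑ x ∈ ({a, b, c, d} : Finset α), f x = f a + f b + f c + f d := by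
  rw [Finset.sum_insert (by simp [hab.ne, (hab.trans hbc).ne, (hab.trans (hbc.trans hcd)).ne]),
    Finset.sum_insert (by simp [hbc.ne, (hbc.trans hcd).ne]), Finset.sum_pair hcd.ne, add_assoc,
    add_assoc]

noncomputable def fourAtomExpectation (η : ℝ) (g : ℝ → ℝ) : ℝ :=
  η / 2 * g (-(1 / √η)) + (1 - η) / 2 * g (-1) + (1 - η) / 2 * g 1 + η / 2 * g (1 / √η)

section FourAtom

variable {η : ℝ}

theorem one_lt_inv_sqrt (hη : 0 < η) (hη1 : η < 1) : 1 < (√η)⁻¹ :=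
  (one_lt_inv₀ (Real.sqrt_pos.2 hη)).2 (by simpa using Real.sqrt_lt_sqrt hη.le hη1)

theorem one_le_inv_sqrt (hη : 0 < η) (hη1 : η ≤ 1) : 1 ≤ (√η)⁻¹ :=
  (one_le_inv₀ (Real.sqrt_pos.2 hη)).2 (Real.sqrt_le_one.2 hη1)

theorem fourAtomExpectation_id (η : ℝ) : fourAtomExpectation η id = 0 := by
  simp only [fourAtomExpectation, id]; ring

theorem fourAtomExpectation_sq (hη : 0 < η) : fourAtomExpectation η (· ^ 2) = 2 - η := by
  simp only [fourAtomExpectation, neg_sq, div_pow, Real.sq_sqrt hη.le]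
  field_simp
  ring

theorem fourAtomExpectation_indicator_Ici (hη : 0 < η) (hη1 : η < 1) :
    fourAtomExpectation η ((Set.Ici (-1)).indicator 1) = 1 - η / 2 := by
  have h := one_lt_inv_sqrt hη hη1
  simp [fourAtomExpectation, h.not_ge, (h.trans' (neg_lt_self_iff.2 one_pos)).le]
  ring

theorem fourAtomExpectation_indicator_Ioi (hη : 0 < η) (hη1 : η ≤ 1) :
    fourAtomExpectation η ((Set.Ioi (-1)).indicator 1) = 1 / 2 := by
  have h := one_le_inv_sqrt hη hη1
  simp [fourAtomExpectation, h.not_gt, h.trans_lt' (neg_lt_self_iff.2 one_pos)]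
  ring

theorem fourAtomExpectation_indicator_Iic_abs (hη : 0 < η) (hη1 : η ≤ 1) :
    fourAtomExpectation η ((Set.Iic (-1)).indicator fun x => |x + 1|) = √η / 2 - η / 2 := by
  have h := one_le_inv_sqrt hη hη1
  simp [fourAtomExpectation, h, (h.trans_lt' (neg_lt_self_iff.2 one_pos)).not_ge]
  rw [abs_of_nonpos (by linarith)]
  field_simp
  linear_combination -Real.sq_sqrt hη.le

theorem integral_comp_eq_fourAtomExpectation {Ω : Type*} [MeasurableSpace Ω] {μ : Measure Ω}
    [IsFiniteMeasure μ] (hη : 0 < η) (hη1 : η < 1) {Y : Ω → ℝ} (hY : Measurable Y)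
    (hrange : ∀ ω, Y ω ∈ ({-(1 / √η), -1, 1, 1 / √η} : Set ℝ))
    (h1 : μ {ω | Y ω = -(1 / √η)} = ENNReal.ofReal (η / 2))
    (h2 : μ {ω | Y ω = -1} = ENNReal.ofReal ((1 - η) / 2))
    (h3 : μ {ω | Y ω = 1} = ENNReal.ofReal ((1 - η) / 2))
    (h4 : μ {ω | Y ω = 1 / √η} = ENNReal.ofReal (η / 2)) (g : ℝ → ℝ) :
    ∫ ω, g (Y ω) ∂μ = fourAtomExpectation η g := by
  have hmass {x p : ℝ} (hp : 0 ≤ p) (h : μ {ω | Y ω = x} = ENNReal.ofReal p) :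
      μ.real (Y ⁻¹' {x}) = p := by
    rw [measureReal_def]; exact (congrArg ENNReal.toReal h).trans (ENNReal.toReal_ofReal hp)
  have h : 1 < 1 / √η := (one_div (√η)).symm ▸ one_lt_inv_sqrt hη hη1
  rw [integral_comp_eq_sum_of_forall_mem (S := {-(1 / √η), -1, 1, 1 / √η}) hY
      (fun ω => by simpa using hrange ω),
    Finset.sum_four_of_lt (neg_lt_neg h) (by norm_num) h, hmass (by linarith) h1,
    hmass (by linarith) h2, hmass (by linarith) h3, hmass (by linarith) h4]
  simp only [fourAtomExpectation, smul_eq_mul]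

end FourAtom

/-- The four-atom random variable underlying the `√η` lower bound:
`Y` takes values `−1/√η, −1, 1, 1/√η` with probabilities `η/2, (1−η)/2, (1−η)/2, η/2`
(`0 < η ≤ 1/4`). Then `𝔼Y = 0`, `𝔼Y² = 2 − η ≤ 2`, `Q_{η/2}(Y) = −1`, and
`𝔼|Y+1|1{Y ≤ −1} = √η/2 − η/2 ≥ √η/4`. -/
theorem four_atom_lower_bound {Ω : Type*} [MeasureSpace Ω]
    [IsProbabilityMeasure (ℙ : Measure Ω)]
    (η : ℝ) (hη : 0 < η) (hη' : η ≤ 1 / 4)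
    (Y : Ω → ℝ) (hYmeas : Measurable Y)
    (hrange : ∀ ω, Y ω ∈ ({-(1 / Real.sqrt η), -1, 1, 1 / Real.sqrt η} : Set ℝ))
    (h1 : ℙ {ω | Y ω = -(1 / Real.sqrt η)} = ENNReal.ofReal (η / 2))
    (h2 : ℙ {ω | Y ω = -1} = ENNReal.ofReal ((1 - η) / 2))
    (h3 : ℙ {ω | Y ω = 1} = ENNReal.ofReal ((1 - η) / 2))
    (h4 : ℙ {ω | Y ω = 1 / Real.sqrt η} = ENNReal.ofReal (η / 2)) :
    (∫ ω, Y ω = 0)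
    ∧ (∫ ω, (Y ω) ^ 2 = 2 - η) ∧ (2 - η ≤ (2 : ℝ))
    ∧ ℙ {ω | -1 ≤ Y ω} = ENNReal.ofReal (1 - η / 2)
    ∧ (∀ t : ℝ, -1 < t → ℙ {ω | t ≤ Y ω} < ENNReal.ofReal (1 - η / 2))
    ∧ (∫ ω in {ω | Y ω ≤ -1}, |Y ω + 1| = Real.sqrt η / 2 - η / 2)
    ∧ Real.sqrt η / 4 ≤ Real.sqrt η / 2 - η / 2 := by
  have hη1 : η < 1 := by linarith
  have hE := integral_comp_eq_fourAtomExpectation hη hη1 hYmeas hrange h1 h2 h3 h4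
  have hP {T : Set ℝ} (hT : MeasurableSet T) :
      ℙ (Y ⁻¹' T) = ENNReal.ofReal (fourAtomExpectation η (T.indicator 1)) := by
    rw [← hE, ← measureReal_preimage_eq_integral_indicator_comp hYmeas hT, ofReal_measureReal]
  have hs : √η ≤ 1 / 2 := Real.sqrt_le_iff.2 ⟨by norm_num, by linarith⟩
  refine ⟨(hE id).trans (fourAtomExpectation_id η), (hE _).trans (fourAtomExpectation_sq hη),
    by linarith, ?_, fun t ht => ?_, ?_, ?_⟩
  · rw [← fourAtomExpectation_indicator_Ici hη hη1]
    exact hP measurableSet_Ici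
  · calc ℙ {ω | t ≤ Y ω} ≤ ℙ (Y ⁻¹' Set.Ioi (-1)) :=
          measure_mono fun ω hω => ht.trans_le hω
      _ = ENNReal.ofReal (1 / 2) := by
        rw [hP measurableSet_Ioi, fourAtomExpectation_indicator_Ioi hη hη1.le]
      _ < ENNReal.ofReal (1 - η / 2) := by
        rw [ENNReal.ofReal_lt_ofReal_iff (by linarith)]; linarith
  · rw [← fourAtomExpectation_indicator_Iic_abs hη hη1.le, ← hE]
    exact setIntegral_preimage_eq_integral_indicator_comp hYmeas measurableSet_Iic fun x => |x + 1|
  · linarith [Real.mul_self_sqrt hη.le, mul_le_mul_of_nonneg_left hs (Real.sqrt_nonneg η)]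
end
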